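/- (Existence and uniqueness of the DES optimal response.) There exists a unique pair (α*, β*) in the feasible set D such that U(α*, β*) ≥ U(α, β) for all (α, β) ∈ D; moreover U(α,β) < U(α*,β*) for every (α,β) ∈ D with (α,β) ≠ (α*,β*). -/
import Mathlib

/-- The DES utility function `U(α,β)` with adaption coefficients
`b_e = (e−1)/X`, `b_h = (e−1)/Y`. -/
noncomputable def desU (X Y ke kh pe ph C0 : ℝ) (q : ℝ × ℝ) : ℝ :=
  ke * Real.log (1 + ((Real.exp 1 - 1) / X) * X * q.1)
  + kh * Real.log (1 + ((Real.exp 1 - 1) / Y) * Y * q.2)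
  + pe * X * (1 - q.1) + ph * Y * (1 - q.2) - C0

/-- The feasible set `D` of the DES optimization problem. -/
def desD (X Y Mmin : ℝ) : Set (ℝ × ℝ) :=
  {q | q.1 ∈ Set.Icc (0:ℝ) 1 ∧ q.2 ∈ Set.Icc (0:ℝ) 1 ∧ X * q.1 + Y * q.2 ≥ Mmin}

lemma expm1_pos : (0:ℝ) < Real.exp 1 - 1 := by
  have := Real.add_one_lt_exp (one_ne_zero (α := ℝ))
  linarith

lemma desU_eq (X Y ke kh pe ph C0 : ℝ) (hX : X ≠ 0) (hY : Y ≠ 0) (q : ℝ × ℝ) :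
    desU X Y ke kh pe ph C0 q =
      ke * Real.log (1 + (Real.exp 1 - 1) * q.1)
      + kh * Real.log (1 + (Real.exp 1 - 1) * q.2)
      + pe * X * (1 - q.1) + ph * Y * (1 - q.2) - C0 := by
  unfold desU
  rw [div_mul_cancel₀ _ hX, div_mul_cancel₀ _ hY]

lemma log_mid_lt (c a b : ℝ) (hc : 0 < c) (ha : 0 ≤ a) (hb : 0 ≤ b) (hab : a ≠ b) :
    (Real.log (1 + c * a) + Real.log (1 + c * b)) / 2 <
      Real.log (1 + c * ((a + b) / 2)) := by
  have hxa : (1 + c * a) ∈ Set.Ioi (0:ℝ) := by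
    simp only [Set.mem_Ioi]; nlinarith
  have hxb : (1 + c * b) ∈ Set.Ioi (0:ℝ) := by
    simp only [Set.mem_Ioi]; nlinarith
  have hne : (1 + c * a) ≠ (1 + c * b) := by
    intro h; apply hab
    have : c * a = c * b := by linarith
    exact mul_left_cancel₀ (ne_of_gt hc) this
  have h := strictConcaveOn_log_Ioi.2 hxa hxb hne (by norm_num : (0:ℝ) < 1/2)
    (by norm_num : (0:ℝ) < 1/2) (by norm_num)
  simp only [smul_eq_mul] at h
  have heq : (1/2 : ℝ) * (1 + c * a) + (1/2) * (1 + c * b)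
      = 1 + c * ((a + b) / 2) := by ring
  rw [heq] at h
  linarith

lemma log_mid_le (c a b : ℝ) (hc : 0 < c) (ha : 0 ≤ a) (hb : 0 ≤ b) :
    (Real.log (1 + c * a) + Real.log (1 + c * b)) / 2 ≤
      Real.log (1 + c * ((a + b) / 2)) := by
  rcases eq_or_ne a b with rfl | h
  · rw [show (a + a) / 2 = a by ring]; linarith
  · exact (log_mid_lt c a b hc ha hb h).le

lemma mid_mem (X Y Mmin : ℝ) {q q' : ℝ × ℝ}
    (hq : q ∈ desD X Y Mmin) (hq' : q' ∈ desD X Y Mmin) :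
    ((q.1 + q'.1) / 2, (q.2 + q'.2) / 2) ∈ desD X Y Mmin := by
  obtain ⟨⟨h1, h2⟩, ⟨h3, h4⟩, h5⟩ := hq
  obtain ⟨⟨g1, g2⟩, ⟨g3, g4⟩, g5⟩ := hq'
  refine ⟨⟨by linarith, by linarith⟩, ⟨by linarith, by linarith⟩, ?_⟩
  simp only [ge_iff_le] at *
  nlinarith

lemma mid_lt (X Y ke kh pe ph C0 Mmin : ℝ)
    (hX : 0 < X) (hY : 0 < Y) (hke : 0 < ke) (hkh : 0 < kh)
    {q q' : ℝ × ℝ} (hq : q ∈ desD X Y Mmin) (hq' : q' ∈ desD X Y Mmin)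
    (hne : q ≠ q') :
    (desU X Y ke kh pe ph C0 q + desU X Y ke kh pe ph C0 q') / 2 <
      desU X Y ke kh pe ph C0 ((q.1 + q'.1) / 2, (q.2 + q'.2) / 2) := by
  obtain ⟨⟨h1, h2⟩, ⟨h3, h4⟩, h5⟩ := hq
  obtain ⟨⟨g1, g2⟩, ⟨g3, g4⟩, g5⟩ := hq'
  rw [desU_eq _ _ _ _ _ _ _ hX.ne' hY.ne', desU_eq _ _ _ _ _ _ _ hX.ne' hY.ne',
    desU_eq _ _ _ _ _ _ _ hX.ne' hY.ne']
  set c := Real.exp 1 - 1 with hcdef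
  have hc : 0 < c := expm1_pos
  have hcoord : q.1 ≠ q'.1 ∨ q.2 ≠ q'.2 := by
    by_contra h
    push_neg at h
    exact hne (Prod.ext h.1 h.2)
  rcases hcoord with h | h
  · have hA := log_mid_lt c q.1 q'.1 hc h1 g1 h
    have hB := log_mid_le c q.2 q'.2 hc h3 g3
    have hA' := mul_lt_mul_of_pos_left hA hke
    have hB' := mul_le_mul_of_nonneg_left hB hkh.le
    simp only []
    nlinarith [hA', hB']
  · have hA := log_mid_le c q.1 q'.1 hc h1 g1
    have hB := log_mid_lt c q.2 q'.2 hc h3 g3 h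
    have hA' := mul_le_mul_of_nonneg_left hA hke.le
    have hB' := mul_lt_mul_of_pos_left hB hkh
    simp only []
    nlinarith [hA', hB']

/-- Existence and uniqueness of the DES optimal response: `U` has a unique
global maximizer on `D`, and the maximum is strict. -/
theorem stmt_10 (X Y ke kh pe ph C0 Mmin : ℝ)
    (hX : 0 < X) (hY : 0 < Y) (hke : 0 < ke) (hkh : 0 < kh)
    (hpe : 0 < pe) (hph : 0 < ph)
    (hM : max X Y < Mmin) (hM' : Mmin < X + Y) :
    ∃ qstar ∈ desD X Y Mmin,
      (∀ q ∈ desD X Y Mmin, desU X Y ke kh pe ph C0 q ≤ desU X Y ke kh pe ph C0 qstar) ∧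
      (∀ q ∈ desD X Y Mmin, q ≠ qstar →
        desU X Y ke kh pe ph C0 q < desU X Y ke kh pe ph C0 qstar) ∧
      (∀ q' ∈ desD X Y Mmin,
        (∀ q ∈ desD X Y Mmin, desU X Y ke kh pe ph C0 q ≤ desU X Y ke kh pe ph C0 q') →
          q' = qstar) := by
  have hXM : X < Mmin := lt_of_le_of_lt (le_max_left X Y) hM
  have hYM : Y < Mmin := lt_of_le_of_lt (le_max_right X Y) hM
  -- nonempty
  have hne : (desD X Y Mmin).Nonempty := by
    refine ⟨(1, (Mmin - X) / Y), ⟨⟨zero_le_one, le_refl 1⟩, ⟨?_, ?_⟩, ?_⟩⟩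
    · exact div_nonneg (by linarith) hY.le
    · rw [div_le_one hY]; linarith
    · have : Y * ((Mmin - X) / Y) = Mmin - X := by
        field_simp
      simp only [ge_iff_le]
      rw [this]; linarith
  -- closed
  have hclosed : IsClosed (desD X Y Mmin) := by
    have e1 : desD X Y Mmin =
        (Prod.fst ⁻¹' Set.Icc (0:ℝ) 1) ∩ (Prod.snd ⁻¹' Set.Icc (0:ℝ) 1) ∩
          {q : ℝ × ℝ | Mmin ≤ X * q.1 + Y * q.2} := by
      ext q
      simp [desD, Set.mem_Icc, and_assoc, ge_iff_le]
    rw [e1]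
    exact ((isClosed_Icc.preimage continuous_fst).inter
      (isClosed_Icc.preimage continuous_snd)).inter
      (isClosed_le continuous_const (by fun_prop))
  -- compact
  have hcompact : IsCompact (desD X Y Mmin) := by
    have hsub : desD X Y Mmin ⊆ Set.Icc ((0:ℝ), (0:ℝ)) (1, 1) := by
      rintro q ⟨⟨a, b⟩, ⟨c, d⟩, -⟩
      exact ⟨⟨a, c⟩, ⟨b, d⟩⟩
    exact IsCompact.of_isClosed_subset isCompact_Icc hclosed hsub
  -- continuity
  have hcont : ContinuousOn (desU X Y ke kh pe ph C0) (desD X Y Mmin) := by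
    unfold desU
    have hc : 0 < Real.exp 1 - 1 := expm1_pos
    have key : ∀ q ∈ desD X Y Mmin,
        (1 + (Real.exp 1 - 1) / X * X * q.1) ≠ 0 ∧
        (1 + (Real.exp 1 - 1) / Y * Y * q.2) ≠ 0 := by
      intro q hq
      obtain ⟨⟨h1, -⟩, ⟨h3, -⟩, -⟩ := hq
      rw [div_mul_cancel₀ _ hX.ne', div_mul_cancel₀ _ hY.ne']
      constructor <;> (intro h; nlinarith)
    apply ContinuousOn.sub ?_ continuousOn_const
    apply ContinuousOn.add
    apply ContinuousOn.add
    apply ContinuousOn.add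
    · exact ContinuousOn.mul continuousOn_const
        (ContinuousOn.log (by fun_prop) (fun q hq => (key q hq).1))
    · exact ContinuousOn.mul continuousOn_const
        (ContinuousOn.log (by fun_prop) (fun q hq => (key q hq).2))
    · fun_prop
    · fun_prop
  obtain ⟨qstar, hqs, hmax⟩ := hcompact.exists_isMaxOn hne hcont
  have hmax' : ∀ q ∈ desD X Y Mmin,
      desU X Y ke kh pe ph C0 q ≤ desU X Y ke kh pe ph C0 qstar := fun q hq => hmax hq
  have hstrict : ∀ q ∈ desD X Y Mmin, q ≠ qstar →
      desU X Y ke kh pe ph C0 q < desU X Y ke kh pe ph C0 qstar := by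
    intro q hq hne'
    rcases lt_or_eq_of_le (hmax' q hq) with h | h
    · exact h
    · exfalso
      have hm := mid_lt X Y ke kh pe ph C0 Mmin hX hY hke hkh hq hqs hne'
      have hmem := mid_mem X Y Mmin hq hqs
      have := hmax' _ hmem
      rw [h] at hm
      linarith
  refine ⟨qstar, hqs, hmax', hstrict, ?_⟩
  intro q' hq' hq'max
  by_contra hne'
  have h1 := hstrict q' hq' hne'
  have h2 := hq'max qstar hqs
  linarith
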